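/- arXiv:1609.08601 — 4 statements merged into one kernel-verified Lean document; each statement's English description precedes it below -/
import Mathlib

section
/- Let 𝔤 be the 5-dimensional Lie algebra with basis p, q, r, s, t and nonzero brackets [s,r] = r, [r,t] = r, [p,q] = r. With φ̂ defined by φ̂(s) = t, φ̂(t) = -s, φ̂(p) = q, φ̂(q) = -p, φ̂(r) = 0, and η₃ the functional dual to r (η₃(r)=1, vanishing on p,q,s,t), the tensor N(X,Y) = φ̂²[X,Y] + [φ̂X,φ̂Y] - φ̂[φ̂X,Y] - φ̂[X,φ̂Y] - η₃([X,Y])·r does NOT vanish identically: in particular N(s, r) = -r ≠ 0. -/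
/-- The `i`-th standard basis vector of `ℝ⁵`; coordinates are in the basis `p, q, r, s, t`. -/
def e5 (i : Fin 5) : Fin 5 → ℝ := Pi.single i 1

/-- The bracket on `ℝ⁵` determined by `[s,r] = r`, `[r,t] = r`, `[p,q] = r` and all other
brackets of basis vectors zero. -/
def g5Bracket' (x y : Fin 5 → ℝ) : Fin 5 → ℝ :=
  (x 3 * y 2 - x 2 * y 3 + x 2 * y 4 - x 4 * y 2 + x 0 * y 1 - x 1 * y 0) • e5 2

/-- The tensor `φ̂` given by `φ̂(p) = q`, `φ̂(q) = -p`, `φ̂(r) = 0`, `φ̂(s) = t`, `φ̂(t) = -s`. -/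
def phiHat (x : Fin 5 → ℝ) : Fin 5 → ℝ := ![-x 1, x 0, 0, -x 4, x 3]

/-- The functional `η₃` dual to `r`. -/
def eta3 (x : Fin 5 → ℝ) : ℝ := x 2

/-- The tensor `N = [φ̂,φ̂] + dη₃ ⊗ r` on constant fields. -/
def Ntensor (X Y : Fin 5 → ℝ) : Fin 5 → ℝ :=
  phiHat (phiHat (g5Bracket' X Y)) + g5Bracket' (phiHat X) (phiHat Y)
    - phiHat (g5Bracket' (phiHat X) Y) - phiHat (g5Bracket' X (phiHat Y))
    - eta3 (g5Bracket' X Y) • e5 2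
theorem stmt_9 :
    Ntensor (e5 3) (e5 2) = -e5 2 ∧ (-e5 2 : Fin 5 → ℝ) ≠ 0 ∧
      ¬(∀ X Y : Fin 5 → ℝ, Ntensor X Y = 0) := by
  have h1 : Ntensor (e5 3) (e5 2) = -e5 2 := by
    funext i
    simp [Ntensor, g5Bracket', phiHat, eta3, e5, Pi.single_apply]
    fin_cases i <;> norm_num
  have h2 : (-e5 2 : Fin 5 → ℝ) ≠ 0 := by
    intro h
    have := congrFun h 2
    simp [e5, Pi.single_apply] at this
  exact ⟨h1, h2, fun h => h2 (h1 ▸ h (e5 3) (e5 2))⟩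
end

section
/- Let 𝔤 be a real Lie algebra, φ : 𝔤 → 𝔤 linear with φ³ + φ = 0, and η : 𝔤 → 𝔤 the projection onto ker φ along im φ. Suppose the condition N(x,y) := φ²[x,y] + [φx,φy] - φ[φx,y] - φ[x,φy] - η[x,y] = 0 holds for all x,y ∈ 𝔤 (here dη(x,y) = -η[x,y] for constant fields). Then for every x ∈ 𝔤 and every ξ ∈ ker φ: η[φx, ξ] = 0 and φ[x,ξ] = [φx, ξ]. -/
theorem stmt_13 (L : Type*) [LieRing L] [LieAlgebra ℝ L]
    (φ η : L →ₗ[ℝ] L)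
    (hφ : ∀ x, φ (φ (φ x)) + φ x = 0)
    (hη_ker : ∀ x, φ (η x) = 0)
    (hη_id : ∀ x, φ x = 0 → η x = x)
    (hη_range : ∀ x, η (φ x) = 0)
    (hN : ∀ x y : L, φ (φ ⁅x, y⁆) + ⁅φ x, φ y⁆ - φ ⁅φ x, y⁆ - φ ⁅x, φ y⁆ - η ⁅x, y⁆ = 0) :
    ∀ (x ξ : L), φ ξ = 0 → η ⁅φ x, ξ⁆ = 0 ∧ φ ⁅x, ξ⁆ = ⁅φ x, ξ⁆ := by
  intro x ξ hξ
  have hcube : ∀ z, φ (φ (φ z)) = -φ z := fun z =>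
    eq_neg_of_add_eq_zero_left (hφ z)
  -- key: η ⁅y, ξ⁆ = 0 for all y
  have key : ∀ y : L, η ⁅y, ξ⁆ = 0 := by
    intro y
    have h1 := hN y ξ
    rw [hξ] at h1
    simp only [lie_zero, map_zero, sub_zero, add_zero] at h1
    -- h1 : φ (φ ⁅y,ξ⁆) - φ ⁅φ y, ξ⁆ - η ⁅y,ξ⁆ = 0
    have h2 := congrArg η h1
    simp only [map_sub, hη_range, map_zero, zero_sub, neg_eq_zero] at h2
    rw [hη_id _ (hη_ker _)] at h2
    simpa using h2
  refine ⟨key (φ x), ?_⟩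
  have h1 := hN x ξ
  rw [hξ] at h1
  simp only [lie_zero, map_zero, sub_zero, add_zero] at h1
  -- h1 : φ (φ ⁅x,ξ⁆) - φ ⁅φ x, ξ⁆ - η ⁅x,ξ⁆ = 0
  have h3 := congrArg φ h1
  simp only [map_sub, hη_ker, map_zero, sub_zero] at h3
  -- h3 : φ (φ (φ ⁅x,ξ⁆)) - φ (φ ⁅φ x, ξ⁆) = 0
  rw [hcube] at h3
  have hsq : φ (φ ⁅φ x, ξ⁆) = -⁅φ x, ξ⁆ := by
    have h0 : φ (φ (φ ⁅φ x, ξ⁆) + ⁅φ x, ξ⁆) = 0 := by rw [map_add]; exact hφ _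
    have h4 := hη_id _ h0
    rw [map_add, hη_range, zero_add, key (φ x)] at h4
    exact eq_neg_of_add_eq_zero_left h4.symm
  rw [hsq] at h3
  exact neg_injective (sub_eq_zero.mp h3)
end

section
/- Let 𝔤 be a real Lie algebra, φ : 𝔤 → 𝔤 linear with φ³ + φ = 0, η the projection onto ker φ along im φ, and assume φ²[x,y] + [φx,φy] - φ[φx,y] - φ[x,φy] = η[x,y] for all x,y. Then ker φ is an abelian subalgebra of 𝔤: for ξ, ζ ∈ ker φ, [ξ,ζ] = 0. -/
theorem stmt_14 (L : Type*) [LieRing L] [LieAlgebra ℝ L]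
    (φ η : L →ₗ[ℝ] L)
    (hφ : ∀ x, φ (φ (φ x)) + φ x = 0)
    (hη_ker : ∀ x, φ (η x) = 0)
    (hη_id : ∀ x, φ x = 0 → η x = x)
    (hη_range : ∀ x, η (φ x) = 0)
    (hN : ∀ x y : L, φ (φ ⁅x, y⁆) + ⁅φ x, φ y⁆ - φ ⁅φ x, y⁆ - φ ⁅x, φ y⁆ = η ⁅x, y⁆) :
    ∀ ξ ζ : L, φ ξ = 0 → φ ζ = 0 → ⁅ξ, ζ⁆ = 0 := by
  intro ξ ζ hξ hζ
  have h := hN ξ ζ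
  simp [hξ, hζ] at h
  -- h : φ (φ ⁅ξ, ζ⁆) = η ⁅ξ, ζ⁆
  have h3 := hφ ⁅ξ, ζ⁆
  rw [h, hη_ker] at h3
  -- h3 : 0 + φ ⁅ξ, ζ⁆ = 0
  have hz : φ ⁅ξ, ζ⁆ = 0 := by simpa using h3
  have := hη_id ⁅ξ, ζ⁆ hz
  rw [this, hz, map_zero] at h
  exact h.symm
end

section
/- Let 𝔤 be a real Lie algebra, φ with φ³ + φ = 0 and η the projection onto ker φ along im φ, satisfying the full normality condition [φ,φ](x,y) = η[x,y] for all x,y. Then for x, y ∈ im φ, η([φx, y] + [x, φy]) = 0. -/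
theorem stmt_18 (L : Type*) [LieRing L] [LieAlgebra ℝ L]
    (φ η : L →ₗ[ℝ] L)
    (hφ : ∀ x, φ (φ (φ x)) + φ x = 0)
    (hη_ker : ∀ x, φ (η x) = 0)
    (hη_id : ∀ x, φ x = 0 → η x = x)
    (hη_range : ∀ x, η (φ x) = 0)
    (hN : ∀ x y : L, φ (φ ⁅x, y⁆) + ⁅φ x, φ y⁆ - φ ⁅φ x, y⁆ - φ ⁅x, φ y⁆ - η ⁅x, y⁆ = 0) :
    ∀ x ∈ LinearMap.range φ, ∀ y ∈ LinearMap.range φ, η (⁅φ x, y⁆ + ⁅x, φ y⁆) = 0 := by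
  have key : ∀ u v : L, η ⁅φ u, φ v⁆ = η ⁅u, v⁆ := by
    intro u v
    have h := congrArg η (hN u v)
    have hηη : η (η ⁅u, v⁆) = η ⁅u, v⁆ := hη_id _ (hη_ker _)
    simpa [map_add, map_sub, hη_range, hηη, sub_eq_zero] using h
  rintro x ⟨a, rfl⟩ y ⟨b, rfl⟩
  have hx2 : φ (φ (φ a)) = -φ a := eq_neg_of_add_eq_zero_left (hφ a)
  have h := key (φ (φ a)) (φ b)
  rw [hx2] at h
  simp only [map_add, lie_neg, neg_lie, map_neg] at h ⊢
  rw [← h]; abel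
end
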